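/- For the max-pooling latent translation, the cardinality of the critical set is at most the dimension d of the latent space: |C_n(x)| ≤ d. -/
import Mathlib


def Lpoint {α : Type*} {d : ℕ} (h : α → Fin d → ℝ) (x : Finset α) : Fin d → WithBot ℝ :=
  fun k => x.sup fun a => ((h a k : ℝ) : WithBot ℝ)

def Cn {α : Type*} [DecidableEq α] {d : ℕ} (h : α → Fin d → ℝ) (x : Finset α) : Set α :=
  {a | a ∈ x ∧ Lpoint h (x.erase a) ≠ Lpoint h x}

lemma sup_eq_of_ne {α : Type*} [DecidableEq α] {d : ℕ} (h : α → Fin d → ℝ)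
    (x : Finset α) {a : α} (ha : a ∈ x) {k : Fin d}
    (hne : Lpoint h (x.erase a) k ≠ Lpoint h x k) :
    Lpoint h x k = ((h a k : ℝ) : WithBot ℝ) := by
  have hins : insert a (x.erase a) = x := Finset.insert_erase ha
  have key : x.sup (fun c => ((h c k : ℝ) : WithBot ℝ)) =
      (insert a (x.erase a)).sup (fun c => ((h c k : ℝ) : WithBot ℝ)) := by rw [hins]
  rw [Finset.sup_insert] at key
  have hthis : Lpoint h x k = ((h a k : ℝ) : WithBot ℝ) ⊔ Lpoint h (x.erase a) k := key
  rcases le_total (Lpoint h (x.erase a) k) ((h a k : ℝ) : WithBot ℝ) with h2 | h2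
  · rw [hthis]; exact sup_eq_left.mpr h2
  · exact absurd (hthis.trans (sup_eq_right.mpr h2)) (Ne.symm hne)

/-- The critical set of max pooling has at most `d` elements. -/
theorem stmt_6 {α : Type*} [DecidableEq α] {d : ℕ} (h : α → Fin d → ℝ)
    (x : Finset α) (hx : 2 ≤ x.card) :
    (Cn h x).ncard ≤ d := by
  rcases Nat.eq_zero_or_pos d with rfl | hd
  · have : Cn h x = ∅ := by
      ext a
      simp only [Cn, Set.mem_setOf_eq, Set.mem_empty_iff_false, iff_false, not_and]
      intro _
      simp [funext_iff]
    simp [this]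
  · haveI : Nonempty (Fin d) := ⟨⟨0, hd⟩⟩
    classical
    set P : α → Fin d → Prop := fun a k => Lpoint h (x.erase a) k ≠ Lpoint h x k with hP
    set f : α → Fin d := fun a => if hc : ∃ k, P a k then hc.choose else Classical.arbitrary _
      with hf
    have hspec : ∀ a ∈ Cn h x, P a (f a) := by
      intro a ha
      have hex : ∃ k, P a k := by
        by_contra hno
        push_neg at hno
        exact ha.2 (funext fun k => not_not.mp (hno k))
      simp only [hf, dif_pos hex]
      exact hex.choose_spec
    have hinj : Set.InjOn f (Cn h x) := by
      intro a ha b hb hab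
      by_contra hne
      set k := f a with hk
      have hPa : P a k := hspec a ha
      have hPb : P b k := hab ▸ hspec b hb
      have hax : Lpoint h x k = ((h a k : ℝ) : WithBot ℝ) := sup_eq_of_ne h x ha.1 hPa
      have hbx : Lpoint h x k = ((h b k : ℝ) : WithBot ℝ) := sup_eq_of_ne h x hb.1 hPb
      -- a ∈ erase b, so sup over erase b ≥ h a k = sup x
      have hmem : a ∈ x.erase b := Finset.mem_erase.mpr ⟨hne, ha.1⟩
      have hge : ((h a k : ℝ) : WithBot ℝ) ≤ Lpoint h (x.erase b) k :=
        Finset.le_sup (f := fun c => ((h c k : ℝ) : WithBot ℝ)) hmem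
      have hle : Lpoint h (x.erase b) k ≤ Lpoint h x k :=
        Finset.sup_mono (Finset.erase_subset _ _)
      exact hPb (le_antisymm hle (hax ▸ hge))
    calc (Cn h x).ncard = (f '' Cn h x).ncard := (Set.ncard_image_of_injOn hinj).symm
      _ ≤ (Set.univ : Set (Fin d)).ncard :=
          Set.ncard_le_ncard (Set.subset_univ _) Set.finite_univ
      _ = d := by simp [Set.ncard_univ]
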